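/- Let C(p,q) = (1/2)log(1 + cp/(1+aq)) + (1/2)log(1 + dq/(1+bp)) with 0 < a < d, 0 < b < c and √(ac) + √(bd) ≤ √(cd). Then at any point (p,q) on the boundary line √(ac)(1+bp) + √(bd)(1+aq) = √(cd) with p,q > 0, the partial derivative ∂C/∂p is positive. -/

import Mathlib

/-!
Differentiating `log (1 + u / v)` as `log (v + u) - log v` gives
`∂C/∂p = (c/(1+cp+aq) + b/(1+bp+dq) - b/(1+bp)) / 2`, which is positive iff
`c (1+bp)(1+bp+dq) > b d q (1+cp+aq)`. The difference of the two sides is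
`c (1+bp)² + d q (c - b (1+aq))`, and on the boundary line
`√(bd) (1+aq) < √(cd)`, i.e. `b (1+aq)² < c`, so `b (1+aq) < c`.
-/

open Real

/-- The treating-interference-as-noise sum rate of a two-user GIC. -/
noncomputable def Csum (a b c d p q : ℝ) : ℝ :=
  (1 / 2) * Real.log (1 + c * p / (1 + a * q))
    + (1 / 2) * Real.log (1 + d * q / (1 + b * p))

theorem HasDerivAt.log_one_add_div {f g : ℝ → ℝ} {f' g' x : ℝ}
    (hf : HasDerivAt f f' x) (hg : HasDerivAt g g' x) (hgx : g x ≠ 0)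
    (hgfx : g x + f x ≠ 0) :
    HasDerivAt (fun t => Real.log (1 + f t / g t)) ((f' + g') / (g x + f x) - g' / g x) x := by
  have hquot : 1 + f x / g x ≠ 0 := by
    rw [one_add_div hgx]
    exact div_ne_zero hgfx hgx
  refine (((hf.div hg hgx).const_add 1).log hquot).congr_deriv ?_
  rw [Pi.div_apply, one_add_div hgx]
  field_simp
  ring

theorem hasDerivAt_Csum_fst (a b c d p q : ℝ) (haq : 1 + a * q ≠ 0) (hbp : 1 + b * p ≠ 0)
    (hcpaq : 1 + c * p + a * q ≠ 0) (hbpdq : 1 + b * p + d * q ≠ 0) :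
    HasDerivAt (fun p' => Csum a b c d p' q)
      ((1 / 2) * (c / (1 + c * p + a * q) + b / (1 + b * p + d * q) - b / (1 + b * p))) p := by
  have hlin (k : ℝ) : HasDerivAt (fun y => k * y) k p := by
    simpa using (hasDerivAt_id' p).const_mul k
  have hsignal : HasDerivAt (fun p' => Real.log (1 + c * p' / (1 + a * q)))
      (c / (1 + c * p + a * q)) p := by
    have h := (hlin c).log_one_add_div (hasDerivAt_const p (1 + a * q)) haq
      (by rwa [add_right_comm])
    simpa [add_right_comm] using h
  have hinterf : HasDerivAt (fun p' => Real.log (1 + d * q / (1 + b * p')))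
      (b / (1 + b * p + d * q) - b / (1 + b * p)) p := by
    simpa using (hasDerivAt_const p (d * q)).log_one_add_div ((hlin b).const_add 1) hbp hbpdq
  exact ((hsignal.const_mul (1 / 2)).add (hinterf.const_mul (1 / 2))).congr_deriv (by ring)

theorem mul_one_add_lt_of_boundary {a b c d p q : ℝ} (ha : 0 < a) (hb : 0 < b) (hc : 0 < c)
    (hd : 0 < d) (hp : 0 ≤ p) (hq : 0 ≤ q)
    (hline : √(a * c) * (1 + b * p) + √(b * d) * (1 + a * q) = √(c * d)) :
    b * (1 + a * q) < c := by
  have hlt : √(b * d) * (1 + a * q) < √(c * d) := by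
    have : 0 < √(a * c) * (1 + b * p) := by positivity
    linarith
  have hsq : b * (1 + a * q) ^ 2 < c := by
    have h := pow_lt_pow_left₀ hlt (by positivity) two_ne_zero
    rw [mul_pow, sq_sqrt (by positivity), sq_sqrt (by positivity)] at h
    nlinarith
  nlinarith [mul_nonneg (mul_nonneg hb.le (mul_nonneg ha.le hq)) (by positivity : 0 ≤ 1 + a * q)]

theorem Csum_deriv_fst_pos_of_mul_lt {a b c d p q : ℝ} (ha : 0 ≤ a) (hb : 0 ≤ b) (hc : 0 < c)
    (hd : 0 ≤ d) (hp : 0 ≤ p) (hq : 0 ≤ q) (hbc : b * (1 + a * q) < c) :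
    0 < c / (1 + c * p + a * q) + b / (1 + b * p + d * q) - b / (1 + b * p) := by
  have hbp : 0 < 1 + b * p := by positivity
  have hbpdq : 0 < 1 + b * p + d * q := by positivity
  have hgap : b / (1 + b * p) - b / (1 + b * p + d * q)
      = b * d * q / ((1 + b * p) * (1 + b * p + d * q)) := by
    field_simp
    ring
  have hkey : b * d * q * (1 + c * p + a * q) < c * ((1 + b * p) * (1 + b * p + d * q)) := by
    nlinarith [mul_nonneg hd (mul_nonneg hq (sub_nonneg.2 hbc.le)), pow_pos hbp 2]
  have hlt : b * d * q / ((1 + b * p) * (1 + b * p + d * q)) < c / (1 + c * p + a * q) := by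
    rw [div_lt_div_iff₀ (by positivity) (by positivity)]
    linarith
  linarith

theorem Csum_partial_deriv_pos_on_boundary_general (a b c d p q : ℝ)
    (ha : 0 < a) (had : a < d) (hb : 0 < b) (hbc : b < c)
    (hp : 0 < p) (hq : 0 < q)
    (hline : Real.sqrt (a * c) * (1 + b * p) + Real.sqrt (b * d) * (1 + a * q)
      = Real.sqrt (c * d)) :
    HasDerivAt (fun p' => Csum a b c d p' q)
      ((1 / 2) * (c / (1 + c * p + a * q) + b / (1 + b * p + d * q)
        - b / (1 + b * p))) p ∧
    0 < (1 / 2) * (c / (1 + c * p + a * q) + b / (1 + b * p + d * q)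
      - b / (1 + b * p)) := by
  have hc : 0 < c := hb.trans hbc
  have hd : 0 < d := ha.trans had
  have haq : 0 < 1 + a * q := by positivity
  have hbp : 0 < 1 + b * p := by positivity
  have hcpaq : 0 < 1 + c * p + a * q := by positivity
  have hbpdq : 0 < 1 + b * p + d * q := by positivity
  refine ⟨hasDerivAt_Csum_fst a b c d p q haq.ne' hbp.ne' hcpaq.ne' hbpdq.ne', ?_⟩
  have hbaq := mul_one_add_lt_of_boundary ha hb hc hd hp.le hq.le hline
  have := Csum_deriv_fst_pos_of_mul_lt ha.le hb.le hc hd.le hp.le hq.le hbaq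
  positivity

/-- on the boundary line of the noisy-interference region with
p,q > 0, the partial derivative ∂C/∂p is positive. -/
theorem Csum_partial_deriv_pos_on_boundary (a b c d p q : ℝ)
    (ha : 0 < a) (had : a < d) (hb : 0 < b) (hbc : b < c)
    (hNI : Real.sqrt (a * c) + Real.sqrt (b * d) ≤ Real.sqrt (c * d))
    (hp : 0 < p) (hq : 0 < q)
    (hline : Real.sqrt (a * c) * (1 + b * p) + Real.sqrt (b * d) * (1 + a * q)
      = Real.sqrt (c * d)) :
    HasDerivAt (fun p' => Csum a b c d p' q)
      ((1 / 2) * (c / (1 + c * p + a * q) + b / (1 + b * p + d * q)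
        - b / (1 + b * p))) p ∧
    0 < (1 / 2) * (c / (1 + c * p + a * q) + b / (1 + b * p + d * q)
      - b / (1 + b * p)) :=
  Csum_partial_deriv_pos_on_boundary_general a b c d p q ha had hb hbc hp hq hline
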